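/- If A is a square matrix over \widehat{ℤG}_χ with ‖A‖ < 1, then I − A is invertible in the matrix ring over \widehat{ℤG}_χ, and ‖(I − A)⁻¹‖ ≤ 1. -/

import Mathlib

variable {G : Type*}

/-- The Novikov support condition: for every `r : ℝ` the set
`supp(l) ∩ χ⁻¹([r,∞))` is finite.  The Novikov ring `ℤG^` is the set of
functions `l : G → ℤ` satisfying this condition. -/
def NovikovCond [Group G] (χ : G → ℝ) (l : G → ℤ) : Prop :=
  ∀ r : ℝ, {g : G | l g ≠ 0 ∧ r ≤ χ g}.Finite

/-- Convolution product `(l₁·l₂)(g) = Σ_{h₁h₂=g} l₁(h₁)·l₂(h₂)`. -/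
noncomputable def novConv [Group G] (l₁ l₂ : G → ℤ) : G → ℤ :=
  fun g => ∑ᶠ p ∈ {p : G × G | p.1 * p.2 = g}, l₁ p.1 * l₂ p.2

open Classical in
/-- The unit of the Novikov ring: the indicator function of the identity of `G`. -/
noncomputable def novOne [Group G] : G → ℤ :=
  fun g => if g = 1 then 1 else 0

open Classical in
/-- The norm `‖l‖ = exp (sup {χ g | g ∈ supp l})` for `l ≠ 0`, and `‖0‖ = 0`. -/
noncomputable def novNorm [Group G] (χ : G → ℝ) (l : G → ℤ) : ℝ :=
  if l = 0 then 0 else Real.exp (sSup {x : ℝ | ∃ g : G, l g ≠ 0 ∧ χ g = x})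

/-- Product of matrices over the Novikov ring (entrywise convolution products). -/
noncomputable def matMulNov [Group G] {m n p : ℕ}
    (A : Matrix (Fin m) (Fin n) (G → ℤ)) (B : Matrix (Fin n) (Fin p) (G → ℤ)) :
    Matrix (Fin m) (Fin p) (G → ℤ) :=
  Matrix.of fun i j => ∑ k : Fin n, novConv (A i k) (B k j)

/-- The identity matrix over the Novikov ring. -/
noncomputable def matIdNov [Group G] (n : ℕ) : Matrix (Fin n) (Fin n) (G → ℤ) :=
  Matrix.of fun i j => if i = j then novOne else 0

/-- The norm of a matrix over the Novikov ring: the maximum of the norms of its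
entries (`0` for empty matrices). -/
noncomputable def matNorm [Group G] (χ : G → ℝ) {m n : ℕ}
    (A : Matrix (Fin m) (Fin n) (G → ℤ)) : ℝ :=
  ⨆ i, ⨆ j, novNorm χ (A i j)

/-!
The inverse is the Neumann series `∑ₖ Aᵏ`. Since `‖A‖ < 1`, all entries of `A` are supported in
`χ ≤ c` for one `c < 0`, so those of `Aᵏ` are supported in `χ ≤ k c`. Hence above any level of `χ`
only finitely many powers contribute: the series is a matrix over the Novikov ring, supported in
`χ ≤ 0` (so of norm `≤ 1`), and multiplication by a Novikov element may be taken termwise. Then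
`A · ∑ₖ Aᵏ = ∑ₖ Aᵏ⁺¹ = ∑ₖ Aᵏ - I`, and the same on the right.
-/

open Function Filter

def SupportLE (χ : G → ℝ) (l : G → ℤ) (c : ℝ) : Prop :=
  ∀ g, l g ≠ 0 → χ g ≤ c

theorem SupportLE.mono {χ : G → ℝ} {l : G → ℤ} {c c' : ℝ} (h : SupportLE χ l c)
    (hcc' : c ≤ c') : SupportLE χ l c' :=
  fun g hg => (h g hg).trans hcc'

section Convolution

variable [Group G] {χ : G → ℝ} {l l' l₁ l₂ f f' : G → ℤ} {c c₁ c₂ : ℝ}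

theorem map_one_of_map_mul (hχ : ∀ a b : G, χ (a * b) = χ a + χ b) : χ 1 = 0 := by
  simpa using hχ 1 1

theorem map_inv_mul_of_map_mul (hχ : ∀ a b : G, χ (a * b) = χ a + χ b) (h g : G) :
    χ (h⁻¹ * g) = χ g - χ h := by
  rw [eq_sub_iff_add_eq', ← hχ, mul_inv_cancel_left]

theorem NovikovCond.exists_supportLE (hl : NovikovCond χ l) : ∃ c, SupportLE χ l c := by
  obtain ⟨c, hc⟩ := ((hl 0).image χ).bddAbove
  refine ⟨max c 0, fun g hg => ?_⟩
  rcases le_or_gt 0 (χ g) with h | h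
  · exact le_max_of_le_left (hc ⟨g, ⟨hg, h⟩, rfl⟩)
  · exact le_max_of_le_right h.le

theorem NovikovCond.zero : NovikovCond χ (0 : G → ℤ) := by
  simp [NovikovCond]

theorem NovikovCond.novOne : NovikovCond χ (novOne : G → ℤ) := by
  intro r
  refine (Set.finite_singleton (1 : G)).subset fun g hg => ?_
  by_contra hg1
  exact hg.1 (if_neg hg1)

theorem NovikovCond.finset_sum {ι : Type*} {s : Finset ι} {f : ι → G → ℤ}
    (hf : ∀ i ∈ s, NovikovCond χ (f i)) : NovikovCond χ (∑ i ∈ s, f i) := by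
  intro r
  refine (s.finite_toSet.biUnion fun i hi => hf i hi r).subset ?_
  rintro g ⟨hg, hrg⟩
  rw [Finset.sum_apply] at hg
  obtain ⟨i, hi, hig⟩ := Finset.exists_ne_zero_of_sum_ne_zero hg
  exact Set.mem_biUnion hi ⟨hig, hrg⟩

theorem supportLE_novOne (hχ : ∀ a b : G, χ (a * b) = χ a + χ b) :
    SupportLE χ (novOne : G → ℤ) 0 := by
  intro g hg
  by_cases hg1 : g = 1
  · rw [hg1, map_one_of_map_mul hχ]
  · exact absurd (if_neg hg1) hg

theorem novConv_apply (l₁ l₂ : G → ℤ) (g : G) :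
    novConv l₁ l₂ g = ∑ᶠ h, l₁ h * l₂ (h⁻¹ * g) := by
  have hpairs : {p : G × G | p.1 * p.2 = g} = Set.range fun h : G => (h, h⁻¹ * g) := by
    ext ⟨a, b⟩
    constructor
    · rintro (rfl : a * b = g)
      exact ⟨a, by simp⟩
    · rintro ⟨h, hab⟩
      simp only [Prod.mk.injEq] at hab
      simp [← hab.1, ← hab.2]
  rw [novConv, hpairs, finsum_mem_range]
  exact fun a b hab => (Prod.ext_iff.1 hab).1

theorem exists_ne_zero_of_novConv_ne_zero {g : G} (h : novConv l₁ l₂ g ≠ 0) :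
    ∃ x, l₁ x ≠ 0 ∧ l₂ (x⁻¹ * g) ≠ 0 := by
  rw [novConv_apply] at h
  obtain ⟨x, hx⟩ : ∃ x, l₁ x * l₂ (x⁻¹ * g) ≠ 0 :=
    not_forall.1 fun hzero => h (finsum_eq_zero_of_forall_eq_zero hzero)
  exact ⟨x, left_ne_zero_of_mul hx, right_ne_zero_of_mul hx⟩

theorem SupportLE.novConv (hχ : ∀ a b : G, χ (a * b) = χ a + χ b)
    (h₁ : SupportLE χ l₁ c₁) (h₂ : SupportLE χ l₂ c₂) :
    SupportLE χ (novConv l₁ l₂) (c₁ + c₂) := by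
  intro g hg
  obtain ⟨x, hx₁, hx₂⟩ := exists_ne_zero_of_novConv_ne_zero hg
  have := h₂ _ hx₂
  rw [map_inv_mul_of_map_mul hχ] at this
  linarith [h₁ x hx₁]

theorem NovikovCond.novConv (hχ : ∀ a b : G, χ (a * b) = χ a + χ b)
    (h₁ : NovikovCond χ l₁) (h₂ : NovikovCond χ l₂) : NovikovCond χ (novConv l₁ l₂) := by
  obtain ⟨c₁, hc₁⟩ := h₁.exists_supportLE
  obtain ⟨c₂, hc₂⟩ := h₂.exists_supportLE
  intro r
  refine (((h₁ (r - c₂)).prod (h₂ (r - c₁))).image fun p : G × G => p.1 * p.2).subset ?_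
  rintro g ⟨hg, hrg⟩
  obtain ⟨x, hx₁, hx₂⟩ := exists_ne_zero_of_novConv_ne_zero hg
  have hχx := hc₁ x hx₁
  have hχy := hc₂ _ hx₂
  rw [map_inv_mul_of_map_mul hχ] at hχy
  refine ⟨(x, x⁻¹ * g), ⟨⟨hx₁, by linarith⟩, ⟨hx₂, ?_⟩⟩, mul_inv_cancel_left x g⟩
  rw [map_inv_mul_of_map_mul hχ]
  linarith

theorem finite_support_novConv_summand (hχ : ∀ a b : G, χ (a * b) = χ a + χ b)
    (h₁ : NovikovCond χ l₁) (h₂ : SupportLE χ l₂ c) (g : G) :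
    (support fun x => l₁ x * l₂ (x⁻¹ * g)).Finite := by
  refine (h₁ (χ g - c)).subset fun x hx => ?_
  have hx₂ := h₂ _ (right_ne_zero_of_mul hx)
  rw [map_inv_mul_of_map_mul hχ] at hx₂
  exact ⟨left_ne_zero_of_mul hx, by linarith⟩

theorem novConv_zero_left (l : G → ℤ) : novConv 0 l = 0 := by
  funext g
  simp [novConv_apply]

theorem novConv_zero_right (l : G → ℤ) : novConv l 0 = 0 := by
  funext g
  simp [novConv_apply]

theorem novOne_novConv (l : G → ℤ) : novConv novOne l = l := by
  funext g
  rw [novConv_apply, finsum_eq_single _ 1 fun x hx => by simp [novOne, hx]]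
  simp [novOne]

theorem novConv_novOne (l : G → ℤ) : novConv l novOne = l := by
  funext g
  rw [novConv_apply, finsum_eq_single _ g fun x hx => by
    simp [novOne, inv_mul_eq_one, hx]]
  simp [novOne]

theorem novConv_congr_right (hχ : ∀ a b : G, χ (a * b) = χ a + χ b) (hl : SupportLE χ l c)
    {g : G} (hff' : ∀ x, χ g - c ≤ χ x → f x = f' x) : novConv l f g = novConv l f' g := by
  rw [novConv_apply, novConv_apply]
  refine finsum_congr fun x => ?_
  by_cases hx : l x = 0
  · simp [hx]
  · rw [hff' _ (by linarith [map_inv_mul_of_map_mul hχ x g, hl x hx])]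

theorem novConv_congr_left (hχ : ∀ a b : G, χ (a * b) = χ a + χ b) (hf : SupportLE χ f c)
    {g : G} (hll' : ∀ x, χ g - c ≤ χ x → l x = l' x) : novConv l f g = novConv l' f g := by
  rw [novConv_apply, novConv_apply]
  refine finsum_congr fun x => ?_
  by_cases hx : f (x⁻¹ * g) = 0
  · simp [hx]
  · rw [hll' _ (by linarith [map_inv_mul_of_map_mul hχ x g, hf _ hx])]

theorem novConv_finset_sum_right (hχ : ∀ a b : G, χ (a * b) = χ a + χ b)
    (hl : NovikovCond χ l) {ι : Type*} (s : Finset ι) {f : ι → G → ℤ}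
    (hf : ∀ i ∈ s, NovikovCond χ (f i)) :
    novConv l (∑ i ∈ s, f i) = ∑ i ∈ s, novConv l (f i) := by
  funext g
  simp only [novConv_apply, Finset.sum_apply, Finset.mul_sum]
  refine finsum_sum_comm s _ fun i hi => ?_
  obtain ⟨c, hc⟩ := (hf i hi).exists_supportLE
  exact finite_support_novConv_summand hχ hl hc g

theorem novConv_finset_sum_left (hχ : ∀ a b : G, χ (a * b) = χ a + χ b)
    (hl : NovikovCond χ l) {ι : Type*} (s : Finset ι) {f : ι → G → ℤ}
    (hf : ∀ i ∈ s, NovikovCond χ (f i)) :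
    novConv (∑ i ∈ s, f i) l = ∑ i ∈ s, novConv (f i) l := by
  obtain ⟨c, hc⟩ := hl.exists_supportLE
  funext g
  simp only [novConv_apply, Finset.sum_apply, Finset.sum_mul]
  exact finsum_sum_comm s _ fun i hi => finite_support_novConv_summand hχ (hf i hi) hc g

theorem novConv_sub_right (hχ : ∀ a b : G, χ (a * b) = χ a + χ b)
    (hl₁ : NovikovCond χ l₁) (hf : NovikovCond χ f) (hf' : NovikovCond χ f') :
    novConv l₁ (f - f') = novConv l₁ f - novConv l₁ f' := by
  obtain ⟨c, hc⟩ := hf.exists_supportLE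
  obtain ⟨c', hc'⟩ := hf'.exists_supportLE
  funext g
  simp only [novConv_apply, Pi.sub_apply, mul_sub]
  exact finsum_sub_distrib (finite_support_novConv_summand hχ hl₁ hc g)
    (finite_support_novConv_summand hχ hl₁ hc' g)

theorem novConv_sub_left (hχ : ∀ a b : G, χ (a * b) = χ a + χ b)
    (hl : NovikovCond χ l) (hl' : NovikovCond χ l') (hf : NovikovCond χ f) :
    novConv (l - l') f = novConv l f - novConv l' f := by
  obtain ⟨c, hc⟩ := hf.exists_supportLE
  funext g
  simp only [novConv_apply, Pi.sub_apply, sub_mul]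
  exact finsum_sub_distrib (finite_support_novConv_summand hχ hl hc g)
    (finite_support_novConv_summand hχ hl' hc g)

/-- Both sides are `∑ᶠ (u, v), l₁ u * l₂ v * l₃ ((u * v)⁻¹ * g)`, whose support is finite. -/
theorem novConv_assoc (hχ : ∀ a b : G, χ (a * b) = χ a + χ b) {l₃ : G → ℤ}
    (h₁ : NovikovCond χ l₁) (h₂ : NovikovCond χ l₂) (h₃ : NovikovCond χ l₃) :
    novConv (novConv l₁ l₂) l₃ = novConv l₁ (novConv l₂ l₃) := by
  obtain ⟨c₁, hc₁⟩ := h₁.exists_supportLE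
  obtain ⟨c₂, hc₂⟩ := h₂.exists_supportLE
  obtain ⟨c₃, hc₃⟩ := h₃.exists_supportLE
  funext g
  set F : G × G → ℤ := fun q => l₁ q.1 * l₂ q.2 * l₃ ((q.1 * q.2)⁻¹ * g) with hFdef
  have hF : (support F).Finite := by
    refine ((h₁ (χ g - c₂ - c₃)).prod (h₂ (χ g - c₁ - c₃))).subset fun q hq => ?_
    have hq₁ := left_ne_zero_of_mul (left_ne_zero_of_mul hq)
    have hq₂ := right_ne_zero_of_mul (left_ne_zero_of_mul hq)
    have hq₃ := hc₃ _ (right_ne_zero_of_mul hq)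
    rw [map_inv_mul_of_map_mul hχ, hχ] at hq₃
    exact ⟨⟨hq₁, by linarith [hc₂ _ hq₂]⟩, ⟨hq₂, by linarith [hc₁ _ hq₁]⟩⟩
  let e : G × G ≃ G × G :=
    { toFun := fun q => (q.2, q.2⁻¹ * q.1)
      invFun := fun q => (q.1 * q.2, q.1)
      left_inv := fun q => by simp
      right_inv := fun q => by simp }
  have hFe : (support (F ∘ e)).Finite := by
    rw [support_comp_eq_preimage]
    exact hF.preimage e.injective.injOn
  calc novConv (novConv l₁ l₂) l₃ g
      = ∑ᶠ h, ∑ᶠ u, (F ∘ e) (h, u) := by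
        simp only [novConv_apply, finsum_mul, hFdef, e, comp_apply, Equiv.coe_fn_mk,
          mul_inv_cancel_left]
    _ = ∑ᶠ q, F q := by rw [← finsum_curry _ hFe]; exact finsum_comp_equiv e
    _ = novConv l₁ (novConv l₂ l₃) g := by
        rw [finsum_curry _ hF]
        simp only [novConv_apply, mul_finsum, hFdef, mul_assoc, mul_inv_rev]

end Convolution

section Matrices

variable [Group G] {χ : G → ℝ} {m n p q : ℕ}

theorem matMulNov_apply (A : Matrix (Fin m) (Fin n) (G → ℤ)) (B : Matrix (Fin n) (Fin p) (G → ℤ))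
    (i : Fin m) (j : Fin p) : matMulNov A B i j = ∑ k, novConv (A i k) (B k j) :=
  rfl

theorem matIdNov_apply (i j : Fin n) :
    (matIdNov n i j : G → ℤ) = if i = j then novOne else 0 :=
  rfl

theorem novikovCond_matIdNov (i j : Fin n) : NovikovCond χ (matIdNov n i j : G → ℤ) := by
  rw [matIdNov_apply]
  split_ifs
  exacts [.novOne, .zero]

theorem supportLE_matIdNov (hχ : ∀ a b : G, χ (a * b) = χ a + χ b) (i j : Fin n) :
    SupportLE χ (matIdNov n i j : G → ℤ) 0 := by
  rw [matIdNov_apply]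
  split_ifs
  exacts [supportLE_novOne hχ, fun g hg => absurd rfl hg]

theorem novikovCond_matMulNov (hχ : ∀ a b : G, χ (a * b) = χ a + χ b)
    {A : Matrix (Fin m) (Fin n) (G → ℤ)} {B : Matrix (Fin n) (Fin p) (G → ℤ)}
    (hA : ∀ i j, NovikovCond χ (A i j)) (hB : ∀ i j, NovikovCond χ (B i j)) (i : Fin m)
    (j : Fin p) : NovikovCond χ (matMulNov A B i j) := by
  rw [matMulNov_apply]
  exact NovikovCond.finset_sum fun k _ => (hA i k).novConv hχ (hB k j)

theorem supportLE_matMulNov (hχ : ∀ a b : G, χ (a * b) = χ a + χ b)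
    {A : Matrix (Fin m) (Fin n) (G → ℤ)} {B : Matrix (Fin n) (Fin p) (G → ℤ)} {c₁ c₂ : ℝ}
    (hA : ∀ i j, SupportLE χ (A i j) c₁) (hB : ∀ i j, SupportLE χ (B i j) c₂) (i : Fin m)
    (j : Fin p) : SupportLE χ (matMulNov A B i j) (c₁ + c₂) := by
  intro g hg
  rw [matMulNov_apply, Finset.sum_apply] at hg
  obtain ⟨k, -, hk⟩ := Finset.exists_ne_zero_of_sum_ne_zero hg
  exact (hA i k).novConv hχ (hB k j) g hk

theorem matIdNov_matMulNov (B : Matrix (Fin n) (Fin p) (G → ℤ)) :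
    matMulNov (matIdNov n) B = B := by
  ext i j : 1
  rw [matMulNov_apply, Finset.sum_eq_single i (fun k _ hk => by
    rw [matIdNov_apply, if_neg hk.symm, novConv_zero_left]) (by simp)]
  rw [matIdNov_apply, if_pos rfl, novOne_novConv]

theorem matMulNov_matIdNov (A : Matrix (Fin m) (Fin n) (G → ℤ)) :
    matMulNov A (matIdNov n) = A := by
  ext i j : 1
  rw [matMulNov_apply, Finset.sum_eq_single j (fun k _ hk => by
    rw [matIdNov_apply, if_neg hk, novConv_zero_right]) (by simp)]
  rw [matIdNov_apply, if_pos rfl, novConv_novOne]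

theorem matMulNov_sub_left (hχ : ∀ a b : G, χ (a * b) = χ a + χ b)
    {A A' : Matrix (Fin m) (Fin n) (G → ℤ)} {B : Matrix (Fin n) (Fin p) (G → ℤ)}
    (hA : ∀ i j, NovikovCond χ (A i j)) (hA' : ∀ i j, NovikovCond χ (A' i j))
    (hB : ∀ i j, NovikovCond χ (B i j)) :
    matMulNov (A - A') B = matMulNov A B - matMulNov A' B := by
  ext i j : 1
  simp only [Matrix.sub_apply, matMulNov_apply, ← Finset.sum_sub_distrib,
    novConv_sub_left hχ (hA _ _) (hA' _ _) (hB _ _)]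

theorem matMulNov_sub_right (hχ : ∀ a b : G, χ (a * b) = χ a + χ b)
    {A : Matrix (Fin m) (Fin n) (G → ℤ)} {B B' : Matrix (Fin n) (Fin p) (G → ℤ)}
    (hA : ∀ i j, NovikovCond χ (A i j)) (hB : ∀ i j, NovikovCond χ (B i j))
    (hB' : ∀ i j, NovikovCond χ (B' i j)) :
    matMulNov A (B - B') = matMulNov A B - matMulNov A B' := by
  ext i j : 1
  simp only [Matrix.sub_apply, matMulNov_apply, ← Finset.sum_sub_distrib,
    novConv_sub_right hχ (hA _ _) (hB _ _) (hB' _ _)]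

theorem matMulNov_assoc (hχ : ∀ a b : G, χ (a * b) = χ a + χ b)
    {A : Matrix (Fin m) (Fin n) (G → ℤ)} {B : Matrix (Fin n) (Fin p) (G → ℤ)}
    {C : Matrix (Fin p) (Fin q) (G → ℤ)} (hA : ∀ i j, NovikovCond χ (A i j))
    (hB : ∀ i j, NovikovCond χ (B i j)) (hC : ∀ i j, NovikovCond χ (C i j)) :
    matMulNov (matMulNov A B) C = matMulNov A (matMulNov B C) := by
  ext i j : 1
  simp only [matMulNov_apply]
  calc ∑ l, novConv (∑ k, novConv (A i k) (B k l)) (C l j)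
      = ∑ l, ∑ k, novConv (A i k) (novConv (B k l) (C l j)) := by
        refine Finset.sum_congr rfl fun l _ => ?_
        rw [novConv_finset_sum_left hχ (hC l j) _ fun k _ => (hA i k).novConv hχ (hB k l)]
        exact Finset.sum_congr rfl fun k _ => novConv_assoc hχ (hA i k) (hB k l) (hC l j)
    _ = ∑ k, novConv (A i k) (∑ l, novConv (B k l) (C l j)) := by
        rw [Finset.sum_comm]
        refine Finset.sum_congr rfl fun k _ => ?_
        rw [novConv_finset_sum_right hχ (hA i k) _ fun l _ => (hB k l).novConv hχ (hC l j)]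

end Matrices

/-- Convergence to `0` in the Novikov topology. -/
def NovTendstoZero (χ : G → ℝ) (p : ℕ → G → ℤ) : Prop :=
  ∀ r : ℝ, ∀ᶠ k in atTop, ∀ g, r ≤ χ g → p k g = 0

-- `finsum` gives `0` where infinitely many terms are nonzero; this never happens for the series
-- below, which all tend to zero.
noncomputable def novTsum (p : ℕ → G → ℤ) : G → ℤ :=
  fun g => ∑ᶠ k, p k g

section Series

variable {χ : G → ℝ} {p : ℕ → G → ℤ}

theorem novTsum_apply_eq_sum_range {g : G} {N : ℕ} (hN : ∀ k ≥ N, p k g = 0) :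
    novTsum p g = ∑ k ∈ Finset.range N, p k g := by
  refine finsum_eq_sum_of_support_subset _ fun k hk => ?_
  by_contra hkN
  exact hk (hN k (by simpa using hkN))

theorem NovTendstoZero.eventually_novTsum_eq (hp : NovTendstoZero χ p) (r : ℝ) :
    ∀ᶠ N in atTop, ∀ g, r ≤ χ g → novTsum p g = (∑ k ∈ Finset.range N, p k) g := by
  obtain ⟨N₀, hN₀⟩ := eventually_atTop.1 (hp r)
  filter_upwards [eventually_ge_atTop N₀] with N hN g hg
  rw [Finset.sum_apply]
  exact novTsum_apply_eq_sum_range fun k hk => hN₀ k (hN.trans hk) g hg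

theorem NovTendstoZero.finite_support (hp : NovTendstoZero χ p) (g : G) :
    (support fun k => p k g).Finite := by
  obtain ⟨N, hN⟩ := eventually_atTop.1 (hp (χ g))
  refine (Set.finite_lt_nat N).subset fun k hk => ?_
  by_contra hkN
  exact hk (hN k (not_lt.1 hkN) g le_rfl)

theorem novTendstoZero_of_supportLE {c : ℝ} (hc : c < 0) (hp : ∀ k, SupportLE χ (p k) (k * c)) :
    NovTendstoZero χ p := by
  intro r
  obtain ⟨N, hN⟩ := exists_nat_gt (r / c)
  rw [div_lt_iff_of_neg hc] at hN
  filter_upwards [eventually_ge_atTop N] with k hk g hg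
  by_contra hpk
  have : (k : ℝ) * c ≤ N * c := mul_le_mul_of_nonpos_right (by exact_mod_cast hk) hc.le
  linarith [hp k g hpk]

theorem SupportLE.novTsum {c : ℝ} (hp : ∀ k, SupportLE χ (p k) c) : SupportLE χ (novTsum p) c := by
  intro g hg
  obtain ⟨k, hk⟩ : ∃ k, p k g ≠ 0 :=
    not_forall.1 fun hzero => hg (finsum_eq_zero_of_forall_eq_zero hzero)
  exact hp k g hk

theorem novTsum_succ (hp : NovTendstoZero χ p) :
    novTsum (fun k => p (k + 1)) = novTsum p - p 0 := by
  funext g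
  obtain ⟨N, hN⟩ := eventually_atTop.1 (hp (χ g))
  rw [Pi.sub_apply, novTsum_apply_eq_sum_range (N := N) fun k hk => hN _ (by omega) g le_rfl,
    novTsum_apply_eq_sum_range (N := N + 1) fun k hk => hN _ (by omega) g le_rfl,
    Finset.sum_range_succ']
  ring

theorem novTsum_finset_sum {ι : Type*} (s : Finset ι) {p : ι → ℕ → G → ℤ}
    (hp : ∀ i ∈ s, NovTendstoZero χ (p i)) :
    novTsum (fun k => ∑ i ∈ s, p i k) = ∑ i ∈ s, novTsum (p i) := by
  funext g
  simp only [novTsum, Finset.sum_apply]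
  exact finsum_sum_comm s _ fun i hi => (hp i hi).finite_support g

variable [Group G]

theorem NovTendstoZero.const_novConv (hχ : ∀ a b : G, χ (a * b) = χ a + χ b) {l : G → ℤ}
    {c : ℝ} (hl : SupportLE χ l c) (hp : NovTendstoZero χ p) :
    NovTendstoZero χ fun k => novConv l (p k) := by
  intro r
  filter_upwards [hp (r - c)] with k hk g hg
  rw [novConv_congr_right hχ hl (f' := 0) fun x hx => hk x (by linarith), novConv_zero_right]
  rfl

theorem NovTendstoZero.novConv_const (hχ : ∀ a b : G, χ (a * b) = χ a + χ b) {l : G → ℤ}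
    {c : ℝ} (hl : SupportLE χ l c) (hp : NovTendstoZero χ p) :
    NovTendstoZero χ fun k => novConv (p k) l := by
  intro r
  filter_upwards [hp (r - c)] with k hk g hg
  rw [novConv_congr_left hχ hl (l' := 0) fun x hx => hk x (by linarith), novConv_zero_left]
  rfl

theorem NovikovCond.novTsum (hp : ∀ k, NovikovCond χ (p k)) (hp₀ : NovTendstoZero χ p) :
    NovikovCond χ (novTsum p) := by
  intro r
  obtain ⟨N, hN⟩ := (hp₀.eventually_novTsum_eq r).exists
  refine (NovikovCond.finset_sum (s := Finset.range N) fun k _ => hp k) r |>.subset ?_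
  rintro g ⟨hg, hrg⟩
  exact ⟨hN g hrg ▸ hg, hrg⟩

theorem novConv_novTsum (hχ : ∀ a b : G, χ (a * b) = χ a + χ b) {l : G → ℤ}
    (hl : NovikovCond χ l) (hp : ∀ k, NovikovCond χ (p k)) (hp₀ : NovTendstoZero χ p) :
    novConv l (novTsum p) = novTsum fun k => novConv l (p k) := by
  obtain ⟨c, hc⟩ := hl.exists_supportLE
  funext g
  obtain ⟨N, hN, hN'⟩ := ((hp₀.eventually_novTsum_eq (χ g - c)).and
    ((hp₀.const_novConv hχ hc).eventually_novTsum_eq (χ g))).exists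
  rw [novConv_congr_right hχ hc hN, hN' g le_rfl,
    novConv_finset_sum_right hχ hl _ fun k _ => hp k]

theorem novTsum_novConv (hχ : ∀ a b : G, χ (a * b) = χ a + χ b) {l : G → ℤ}
    (hl : NovikovCond χ l) (hp : ∀ k, NovikovCond χ (p k)) (hp₀ : NovTendstoZero χ p) :
    novConv (novTsum p) l = novTsum fun k => novConv (p k) l := by
  obtain ⟨c, hc⟩ := hl.exists_supportLE
  funext g
  obtain ⟨N, hN, hN'⟩ := ((hp₀.eventually_novTsum_eq (χ g - c)).and
    ((hp₀.novConv_const hχ hc).eventually_novTsum_eq (χ g))).exists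
  rw [novConv_congr_left hχ hc hN, hN' g le_rfl,
    novConv_finset_sum_left hχ hl _ fun k _ => hp k]

end Series

noncomputable def matTsum {m n : ℕ} (P : ℕ → Matrix (Fin m) (Fin n) (G → ℤ)) :
    Matrix (Fin m) (Fin n) (G → ℤ) :=
  Matrix.of fun i j => novTsum fun k => P k i j

theorem matTsum_succ {χ : G → ℝ} {m n : ℕ} {P : ℕ → Matrix (Fin m) (Fin n) (G → ℤ)}
    (hP₀ : ∀ i j, NovTendstoZero χ fun k => P k i j) :
    matTsum (fun k => P (k + 1)) = matTsum P - P 0 := by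
  ext i j : 1
  exact novTsum_succ (hP₀ i j)

section NeumannSeries

variable [Group G] {χ : G → ℝ} {m n p : ℕ}

noncomputable def novPow (A : Matrix (Fin n) (Fin n) (G → ℤ)) :
    ℕ → Matrix (Fin n) (Fin n) (G → ℤ)
  | 0 => matIdNov n
  | k + 1 => matMulNov A (novPow A k)

theorem novPow_zero (A : Matrix (Fin n) (Fin n) (G → ℤ)) :
    novPow A 0 = matIdNov n :=
  rfl

theorem novPow_succ (A : Matrix (Fin n) (Fin n) (G → ℤ)) (k : ℕ) :
    novPow A (k + 1) = matMulNov A (novPow A k) :=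
  rfl

theorem matMulNov_matTsum (hχ : ∀ a b : G, χ (a * b) = χ a + χ b)
    {A : Matrix (Fin m) (Fin n) (G → ℤ)} {P : ℕ → Matrix (Fin n) (Fin p) (G → ℤ)}
    (hA : ∀ i j, NovikovCond χ (A i j)) (hP : ∀ k i j, NovikovCond χ (P k i j))
    (hP₀ : ∀ i j, NovTendstoZero χ fun k => P k i j) :
    matMulNov A (matTsum P) = matTsum fun k => matMulNov A (P k) := by
  ext i j : 1
  simp only [matTsum, Matrix.of_apply, matMulNov_apply]
  rw [novTsum_finset_sum _ fun l _ => (hA i l).exists_supportLE.elim fun _ hc =>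
    (hP₀ l j).const_novConv hχ hc]
  exact Finset.sum_congr rfl fun l _ => novConv_novTsum hχ (hA i l) (fun k => hP k l j) (hP₀ l j)

theorem matTsum_matMulNov (hχ : ∀ a b : G, χ (a * b) = χ a + χ b)
    {P : ℕ → Matrix (Fin m) (Fin n) (G → ℤ)} {A : Matrix (Fin n) (Fin p) (G → ℤ)}
    (hA : ∀ i j, NovikovCond χ (A i j)) (hP : ∀ k i j, NovikovCond χ (P k i j))
    (hP₀ : ∀ i j, NovTendstoZero χ fun k => P k i j) :
    matMulNov (matTsum P) A = matTsum fun k => matMulNov (P k) A := by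
  ext i j : 1
  simp only [matTsum, Matrix.of_apply, matMulNov_apply]
  rw [novTsum_finset_sum _ fun l _ => (hA l j).exists_supportLE.elim fun _ hc =>
    (hP₀ i l).novConv_const hχ hc]
  exact Finset.sum_congr rfl fun l _ => novTsum_novConv hχ (hA l j) (fun k => hP k i l) (hP₀ i l)

theorem novikovCond_novPow (hχ : ∀ a b : G, χ (a * b) = χ a + χ b)
    {A : Matrix (Fin n) (Fin n) (G → ℤ)} (hA : ∀ i j, NovikovCond χ (A i j)) :
    ∀ k i j, NovikovCond χ (novPow A k i j)
  | 0 => novikovCond_matIdNov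
  | k + 1 => novikovCond_matMulNov hχ hA (novikovCond_novPow hχ hA k)

theorem supportLE_novPow (hχ : ∀ a b : G, χ (a * b) = χ a + χ b)
    {A : Matrix (Fin n) (Fin n) (G → ℤ)} {c : ℝ} (hA : ∀ i j, SupportLE χ (A i j) c) :
    ∀ k i j, SupportLE χ (novPow A k i j) (k * c)
  | 0, i, j => by simpa [novPow_zero] using supportLE_matIdNov hχ i j
  | k + 1, i, j => (supportLE_matMulNov hχ hA (supportLE_novPow hχ hA k) i j).mono
      (by push_cast; linarith)

theorem novPow_succ' (hχ : ∀ a b : G, χ (a * b) = χ a + χ b)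
    {A : Matrix (Fin n) (Fin n) (G → ℤ)} (hA : ∀ i j, NovikovCond χ (A i j)) :
    ∀ k, novPow A (k + 1) = matMulNov (novPow A k) A
  | 0 => by rw [novPow_succ, novPow_zero, matMulNov_matIdNov, matIdNov_matMulNov]
  | k + 1 => calc
      novPow A (k + 2) = matMulNov A (matMulNov (novPow A k) A) := by
        rw [novPow_succ, novPow_succ' hχ hA k]
      _ = matMulNov (novPow A (k + 1)) A := by
        rw [← matMulNov_assoc hχ hA (novikovCond_novPow hχ hA k) hA, novPow_succ]

end NeumannSeries

section Norm

variable [Group G] {χ : G → ℝ} {l : G → ℤ} {m n : ℕ}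

theorem exp_le_novNorm (hl : NovikovCond χ l) {g : G} (hg : l g ≠ 0) :
    Real.exp (χ g) ≤ novNorm χ l := by
  obtain ⟨c, hc⟩ := hl.exists_supportLE
  rw [novNorm, if_neg fun h => hg (congrFun h g), Real.exp_le_exp]
  exact le_csSup ⟨c, by rintro _ ⟨x, hx, rfl⟩; exact hc x hx⟩ ⟨g, hg, rfl⟩

theorem novNorm_le_exp {c : ℝ} (hl : SupportLE χ l c) : novNorm χ l ≤ Real.exp c := by
  rw [novNorm]
  split_ifs with h
  · exact (Real.exp_pos c).le
  · obtain ⟨g, hg⟩ := Function.ne_iff.1 h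
    rw [Real.exp_le_exp]
    exact csSup_le ⟨χ g, g, hg, rfl⟩ fun _ ⟨x, hx, hxy⟩ => hxy ▸ hl x hx

theorem novNorm_le_matNorm (A : Matrix (Fin m) (Fin n) (G → ℤ)) (i : Fin m) (j : Fin n) :
    novNorm χ (A i j) ≤ matNorm χ A :=
  (le_ciSup (Set.finite_range _).bddAbove j).trans
    (le_ciSup (f := fun i => ⨆ j, novNorm χ (A i j)) (Set.finite_range _).bddAbove i)

theorem matNorm_le_exp {A : Matrix (Fin m) (Fin n) (G → ℤ)} {c : ℝ}
    (hA : ∀ i j, SupportLE χ (A i j) c) : matNorm χ A ≤ Real.exp c :=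
  Real.iSup_le (fun i => Real.iSup_le (fun j => novNorm_le_exp (hA i j)) (Real.exp_pos c).le)
    (Real.exp_pos c).le

theorem exists_supportLE_of_matNorm_lt_one {A : Matrix (Fin m) (Fin n) (G → ℤ)}
    (hA : ∀ i j, NovikovCond χ (A i j)) (hnorm : matNorm χ A < 1) :
    ∃ c < 0, ∀ i j, SupportLE χ (A i j) c := by
  have hexp : ∀ i j g, A i j g ≠ 0 → Real.exp (χ g) ≤ matNorm χ A :=
    fun i j g hg => (exp_le_novNorm (hA i j) hg).trans (novNorm_le_matNorm A i j)
  by_cases hpos : 0 < matNorm χ A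
  · refine ⟨Real.log (matNorm χ A), Real.log_neg hpos hnorm, fun i j g hg => ?_⟩
    exact (Real.le_log_iff_exp_le hpos).2 (hexp i j g hg)
  · exact ⟨-1, by norm_num, fun i j g hg =>
      absurd ((Real.exp_pos _).trans_le (hexp i j g hg)) hpos⟩

end Norm

/-- If `A` is a square matrix over `ℤG^_χ` with `‖A‖ < 1`, then
`I − A` is invertible in the matrix ring over `ℤG^_χ`, and `‖(I − A)⁻¹‖ ≤ 1`. -/
theorem statement7 [Group G] (χ : G → ℝ) (hχ : ∀ a b : G, χ (a * b) = χ a + χ b)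
    (n : ℕ) (A : Matrix (Fin n) (Fin n) (G → ℤ))
    (hA : ∀ i j, NovikovCond χ (A i j)) (hnorm : matNorm χ A < 1) :
    ∃ B : Matrix (Fin n) (Fin n) (G → ℤ),
      (∀ i j, NovikovCond χ (B i j)) ∧
      matMulNov (matIdNov n - A) B = matIdNov n ∧
      matMulNov B (matIdNov n - A) = matIdNov n ∧
      matNorm χ B ≤ 1 := by
  obtain ⟨c, hc, hAc⟩ := exists_supportLE_of_matNorm_lt_one hA hnorm
  have hP := novikovCond_novPow hχ hA
  have hPc := supportLE_novPow hχ hAc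
  have hP₀ : ∀ i j, NovTendstoZero χ fun k => novPow A k i j :=
    fun i j => novTendstoZero_of_supportLE hc fun k => hPc k i j
  have hB : ∀ i j, NovikovCond χ (matTsum (novPow A) i j) :=
    fun i j => NovikovCond.novTsum (fun k => hP k i j) (hP₀ i j)
  refine ⟨matTsum (novPow A), hB, ?_, ?_, ?_⟩
  · rw [matMulNov_sub_left hχ novikovCond_matIdNov hA hB, matIdNov_matMulNov,
      matMulNov_matTsum hχ hA hP hP₀, ← funext (novPow_succ A), matTsum_succ hP₀, novPow_zero,
      sub_sub_cancel]
  · rw [matMulNov_sub_right hχ hB novikovCond_matIdNov hA, matMulNov_matIdNov,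
      matTsum_matMulNov hχ hA hP hP₀, ← funext (novPow_succ' hχ hA), matTsum_succ hP₀,
      novPow_zero, sub_sub_cancel]
  · rw [← Real.exp_zero]
    exact matNorm_le_exp fun i j => SupportLE.novTsum fun k =>
      (hPc k i j).mono (mul_nonpos_of_nonneg_of_nonpos k.cast_nonneg hc.le)
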